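/- arXiv:1501.07437 — 5 statements merged into one kernel-verified Lean document; each statement's English description precedes it below -/
import Mathlib

section
/- Let $u, w$ be mesh functions such that $F_h[u](i,j) \le F_h[w](i,j)$ for every node $(i,j)$. Then $u_{i,j} \le w_{i,j}$ for every node $(i,j)$. In particular, there is at most one mesh function $v$ with $F_h[v](i,j) = 0$ for all nodes $(i,j)$. -/
open Set Filter

/-- A node `(i,j)` of the grid `{-I,…,I} × {0,…,J}`. -/
abbrev IsNode (I J i j : ℤ) : Prop := -I ≤ i ∧ i ≤ I ∧ 0 ≤ j ∧ j ≤ J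

/-- An interior node: `-I < i < I` and `0 < j ≤ J`. -/
abbrev IsInterior (I J i j : ℤ) : Prop := -I < i ∧ i < I ∧ 0 < j ∧ j ≤ J

/-- A boundary node: a node which is not interior. -/
abbrev IsBoundary (I J i j : ℤ) : Prop := IsNode I J i j ∧ ¬ IsInterior I J i j

/-- The finite difference scheme `F_h` of the paper (equations (3.3), (3.4)):
at interior nodes the upwind discretization of the HJB equation
`βv - 1 - (σ²/2)v_{xx} + min_{a ∈ [aLow,aHigh]} {(kx+a)v_x + |a|v_y} = 0`
(the minimum over the compact interval is attained, hence equals `sInf`),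
and at boundary nodes `v - g`. -/
noncomputable def Fh (I J : ℤ) (h1 h2 β σ k aLow aHigh : ℝ)
    (g v : ℤ → ℤ → ℝ) (i j : ℤ) : ℝ :=
  if IsInterior I J i j then
    β * v i j - 1
      - σ ^ 2 / (2 * h1 ^ 2) * (v (i + 1) j - 2 * v i j + v (i - 1) j)
      + sInf ((fun a : ℝ =>
          max (k * ((i : ℝ) * h1) + a) 0 * ((v i j - v (i - 1) j) / h1)
          - max (-(k * ((i : ℝ) * h1) + a)) 0 * ((v (i + 1) j - v i j) / h1)
          + |a| * ((v i j - v i (j - 1)) / h2)) '' Set.Icc aLow aHigh)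
  else v i j - g i j

/-- The Lipschitz constant `K_h` of the scheme, with `l = I h₁` and
`a_max = max(ā, -a̲)`. -/
noncomputable def Kh (I : ℤ) (h1 h2 β σ k aLow aHigh : ℝ) : ℝ :=
  max 1 β + σ ^ 2 / h1 ^ 2 + (|k| * ((I : ℝ) * h1) + max aHigh (-aLow)) / h1
    + max aHigh (-aLow) / h2

/-- The Euler map `S_ρ[v] = v - ρ F_h[v]`. -/
noncomputable def Euler (I J : ℤ) (h1 h2 β σ k aLow aHigh ρ : ℝ)
    (g v : ℤ → ℤ → ℝ) (i j : ℤ) : ℝ :=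
  v i j - ρ * Fh I J h1 h2 β σ k aLow aHigh g v i j

/-- The grid as a finite set. -/
noncomputable def nodes (I J : ℤ) : Finset (ℤ × ℤ) := Finset.Icc (-I) I ×ˢ Finset.Icc 0 J

lemma nodes_nonempty {I J : ℤ} (hI : 1 ≤ I) (hJ : 1 ≤ J) : (nodes I J).Nonempty :=
  ⟨(0, 0), by simp [nodes, Finset.mem_product, Finset.mem_Icc]; omega⟩

/-- The sup norm `‖v‖_∞ = max_{(i,j)} |v_{i,j}|` over the grid. -/
noncomputable def supNorm (I J : ℤ) (hne : (nodes I J).Nonempty)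
    (v : ℤ → ℤ → ℝ) : ℝ :=
  (nodes I J).sup' hne fun p => |v p.1 p.2|

/-- Comparison principle for the scheme: `F_h[u] ≤ F_h[w]` at all nodes implies
`u ≤ w` at all nodes; in particular there is at most one mesh function `v` with
`F_h[v] = 0` at all nodes. -/
theorem stmt8 (I J : ℤ) (hI : 1 ≤ I) (hJ : 1 ≤ J)
    (h1 h2 β σ k aLow aHigh : ℝ)
    (hh1 : 0 < h1) (hh2 : 0 < h2) (hβ : 0 < β) (hσ : 0 < σ)
    (ha1 : aLow ≤ 0) (ha2 : 0 ≤ aHigh)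
    (g : ℤ → ℤ → ℝ) :
    (∀ u w : ℤ → ℤ → ℝ,
      (∀ i j, IsNode I J i j →
        Fh I J h1 h2 β σ k aLow aHigh g u i j ≤ Fh I J h1 h2 β σ k aLow aHigh g w i j) →
      ∀ i j, IsNode I J i j → u i j ≤ w i j) ∧
    (∀ v₁ v₂ : ℤ → ℤ → ℝ,
      (∀ i j, IsNode I J i j → Fh I J h1 h2 β σ k aLow aHigh g v₁ i j = 0) →
      (∀ i j, IsNode I J i j → Fh I J h1 h2 β σ k aLow aHigh g v₂ i j = 0) →
      ∀ i j, IsNode I J i j → v₁ i j = v₂ i j) := by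
  have comp : ∀ u w : ℤ → ℤ → ℝ,
      (∀ i j, IsNode I J i j →
        Fh I J h1 h2 β σ k aLow aHigh g u i j ≤ Fh I J h1 h2 β σ k aLow aHigh g w i j) →
      ∀ i j, IsNode I J i j → u i j ≤ w i j := by
    intro u w hle i0 j0 hn0
    by_contra hc
    push_neg at hc
    obtain ⟨p, hp, hmax⟩ := Finset.exists_max_image (nodes I J)
      (fun p => u p.1 p.2 - w p.1 p.2) (nodes_nonempty hI hJ)
    obtain ⟨i, j⟩ := p
    simp only [nodes, Finset.mem_product, Finset.mem_Icc] at hp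
    have hpn : IsNode I J i j := ⟨hp.1.1, hp.1.2, hp.2.1, hp.2.2⟩
    have hmax' : ∀ i' j', IsNode I J i' j' → u i' j' - w i' j' ≤ u i j - w i j := by
      intro i' j' hn
      exact hmax (i', j') (by
        simp only [nodes, Finset.mem_product, Finset.mem_Icc]
        exact ⟨⟨hn.1, hn.2.1⟩, hn.2.2.1, hn.2.2.2⟩)
    have hM : 0 < u i j - w i j := lt_of_lt_of_le (by linarith) (hmax' i0 j0 hn0)
    by_cases hint : IsInterior I J i j
    · obtain ⟨hi1, hi2, hj1, hj2⟩ := id hint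
      have hMp : u (i+1) j - w (i+1) j ≤ u i j - w i j := hmax' (i+1) j ⟨by omega, by omega, by omega, by omega⟩
      have hMm : u (i-1) j - w (i-1) j ≤ u i j - w i j := hmax' (i-1) j ⟨by omega, by omega, by omega, by omega⟩
      have hMd : u i (j-1) - w i (j-1) ≤ u i j - w i j := hmax' i (j-1) ⟨by omega, by omega, by omega, by omega⟩
      have key := hle i j hpn
      simp only [Fh, if_pos hint] at key
      set fu : ℝ → ℝ := fun a : ℝ =>
          max (k * ((i : ℝ) * h1) + a) 0 * ((u i j - u (i - 1) j) / h1)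
          - max (-(k * ((i : ℝ) * h1) + a)) 0 * ((u (i + 1) j - u i j) / h1)
          + |a| * ((u i j - u i (j - 1)) / h2) with hfu
      set fw : ℝ → ℝ := fun a : ℝ =>
          max (k * ((i : ℝ) * h1) + a) 0 * ((w i j - w (i - 1) j) / h1)
          - max (-(k * ((i : ℝ) * h1) + a)) 0 * ((w (i + 1) j - w i j) / h1)
          + |a| * ((w i j - w i (j - 1)) / h2) with hfw
      have hSne : (Set.Icc aLow aHigh).Nonempty := ⟨0, ha1, ha2⟩
      have hcw : Continuous fw := by
        rw [hfw]; fun_prop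
      have hbw : BddBelow (fw '' Set.Icc aLow aHigh) :=
        (isCompact_Icc.bddBelow_image hcw.continuousOn)
      have hpt : ∀ a ∈ Set.Icc aLow aHigh, fw a ≤ fu a := by
        intro a _
        have e : fu a - fw a =
            max (k * ((i : ℝ) * h1) + a) 0 * ((u i j - w i j - (u (i-1) j - w (i-1) j)) / h1)
            + max (-(k * ((i : ℝ) * h1) + a)) 0 * ((u i j - w i j - (u (i+1) j - w (i+1) j)) / h1)
            + |a| * ((u i j - w i j - (u i (j-1) - w i (j-1))) / h2) := by
          simp only [hfu, hfw]; ring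
        have t1 : (0:ℝ) ≤ max (k * ((i : ℝ) * h1) + a) 0 *
            ((u i j - w i j - (u (i-1) j - w (i-1) j)) / h1) :=
          mul_nonneg (le_max_right _ _) (div_nonneg (by linarith) hh1.le)
        have t2 : (0:ℝ) ≤ max (-(k * ((i : ℝ) * h1) + a)) 0 *
            ((u i j - w i j - (u (i+1) j - w (i+1) j)) / h1) :=
          mul_nonneg (le_max_right _ _) (div_nonneg (by linarith) hh1.le)
        have t3 : (0:ℝ) ≤ |a| * ((u i j - w i j - (u i (j-1) - w i (j-1))) / h2) :=
          mul_nonneg (abs_nonneg _) (div_nonneg (by linarith) hh2.le)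
        have : 0 ≤ fu a - fw a := e ▸ add_nonneg (add_nonneg t1 t2) t3
        linarith
      have hinf : sInf (fw '' Set.Icc aLow aHigh) ≤ sInf (fu '' Set.Icc aLow aHigh) := by
        apply le_csInf (hSne.image fu)
        rintro b ⟨a, ha, rfl⟩
        exact le_trans (csInf_le hbw ⟨a, ha, rfl⟩) (hpt a ha)
      have hc0 : (0:ℝ) ≤ σ ^ 2 / (2 * h1 ^ 2) := by positivity
      have key2 : β * u i j - σ ^ 2 / (2 * h1 ^ 2) * (u (i+1) j - 2 * u i j + u (i-1) j)
          ≤ β * w i j - σ ^ 2 / (2 * h1 ^ 2) * (w (i+1) j - 2 * w i j + w (i-1) j) := by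
        linarith [key, hinf]
      nlinarith [key2, mul_pos hβ hM,
        mul_nonneg hc0 (show (0:ℝ) ≤ (u i j - w i j) - (u (i+1) j - w (i+1) j) by linarith),
        mul_nonneg hc0 (show (0:ℝ) ≤ (u i j - w i j) - (u (i-1) j - w (i-1) j) by linarith)]
    · have := hle i j hpn
      simp only [Fh, if_neg hint] at this
      linarith
  refine ⟨comp, fun v₁ v₂ hv₁ hv₂ i j hn => le_antisymm
    (comp v₁ v₂ (fun i j hn => by rw [hv₁ i j hn, hv₂ i j hn]) i j hn)
    (comp v₂ v₁ (fun i j hn => by rw [hv₁ i j hn, hv₂ i j hn]) i j hn)⟩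
end

section
/- Let $K_h = \max\{1, \beta\} + \frac{\sigma^2}{h_1^2} + \frac{|k| l + a_{\max}}{h_1} + \frac{a_{\max}}{h_2}$ with $a_{\max} = \max\{\overline{a}, -\underline{a}\}$, and let $0 < \rho \le 1/K_h$. Then the Euler map $S_\rho[v] = v - \rho F_h[v]$ is monotone: for any mesh functions $u, v$ with $u_{i,j} \le v_{i,j}$ at every node, one has $S_\rho[u](i,j) \le S_\rho[v](i,j)$ at every node. -/
open Set Filter

set_option maxHeartbeats 1000000 in
/-- Monotonicity of the Euler map `S_ρ[v] = v - ρ F_h[v]` for `0 < ρ ≤ 1/K_h`. -/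
theorem stmt9 (I J : ℤ) (hI : 1 ≤ I) (hJ : 1 ≤ J)
    (h1 h2 β σ k aLow aHigh : ℝ)
    (hh1 : 0 < h1) (hh2 : 0 < h2) (hβ : 0 < β) (hσ : 0 < σ)
    (ha1 : aLow ≤ 0) (ha2 : 0 ≤ aHigh)
    (ρ : ℝ) (hρ0 : 0 < ρ) (hρ : ρ ≤ 1 / Kh I h1 h2 β σ k aLow aHigh)
    (g u v : ℤ → ℤ → ℝ)
    (hle : ∀ i j, IsNode I J i j → u i j ≤ v i j) :
    ∀ i j, IsNode I J i j →
      Euler I J h1 h2 β σ k aLow aHigh ρ g u i j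
        ≤ Euler I J h1 h2 β σ k aLow aHigh ρ g v i j := by
  -- Basic facts about Kh
  set amax := max aHigh (-aLow) with hamax
  have hamax0 : 0 ≤ amax := le_trans ha2 (le_max_left _ _)
  have hK1 : (1 : ℝ) ≤ Kh I h1 h2 β σ k aLow aHigh := by
    have h1' : (1:ℝ) ≤ max 1 β := le_max_left _ _
    have h2' : 0 ≤ σ ^ 2 / h1 ^ 2 := by positivity
    have hIl : 0 ≤ (I : ℝ) * h1 := by
      have : (0:ℝ) ≤ (I:ℝ) := by exact_mod_cast le_trans zero_le_one hI
      positivity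
    have h3' : 0 ≤ (|k| * ((I : ℝ) * h1) + amax) / h1 := by positivity
    have h4' : 0 ≤ amax / h2 := by positivity
    unfold Kh
    linarith
  have hKpos : 0 < Kh I h1 h2 β σ k aLow aHigh := lt_of_lt_of_le one_pos hK1
  have hρK : ρ * Kh I h1 h2 β σ k aLow aHigh ≤ 1 := by
    calc ρ * Kh I h1 h2 β σ k aLow aHigh
        ≤ (1 / Kh I h1 h2 β σ k aLow aHigh) * Kh I h1 h2 β σ k aLow aHigh :=
          mul_le_mul_of_nonneg_right hρ hKpos.le
      _ = 1 := by field_simp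
  have hρ1 : ρ ≤ 1 := le_trans (by nlinarith) (le_refl 1)
  intro i j hnode
  by_cases hint : IsInterior I J i j
  · -- interior case
    -- neighbor nodes
    have hnode_p : IsNode I J (i + 1) j := by obtain ⟨a, b, c, d⟩ := hint; exact ⟨by omega, by omega, by omega, d⟩
    have hnode_m : IsNode I J (i - 1) j := by obtain ⟨a, b, c, d⟩ := hint; exact ⟨by omega, by omega, by omega, d⟩
    have hnode_d : IsNode I J i (j - 1) := by obtain ⟨a, b, c, d⟩ := hint; exact ⟨by omega, by omega, by omega, by omega⟩
    have w00 : 0 ≤ v i j - u i j := sub_nonneg.2 (hle i j hnode)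
    have wp : 0 ≤ v (i+1) j - u (i+1) j := sub_nonneg.2 (hle _ _ hnode_p)
    have wm : 0 ≤ v (i-1) j - u (i-1) j := sub_nonneg.2 (hle _ _ hnode_m)
    have wd : 0 ≤ v i (j-1) - u i (j-1) := sub_nonneg.2 (hle _ _ hnode_d)
    set x : ℝ := (i : ℝ) * h1 with hx
    -- the functions inside the min
    set φu : ℝ → ℝ := fun a =>
      max (k * x + a) 0 * ((u i j - u (i - 1) j) / h1)
      - max (-(k * x + a)) 0 * ((u (i + 1) j - u i j) / h1)
      + |a| * ((u i j - u i (j - 1)) / h2) with hφu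
    set φv : ℝ → ℝ := fun a =>
      max (k * x + a) 0 * ((v i j - v (i - 1) j) / h1)
      - max (-(k * x + a)) 0 * ((v (i + 1) j - v i j) / h1)
      + |a| * ((v i j - v i (j - 1)) / h2) with hφv
    have hcont_u : Continuous φu := by
      apply Continuous.add
      apply Continuous.sub
      · exact (continuous_const.add continuous_id').max continuous_const |>.mul continuous_const
      · exact ((continuous_const.add continuous_id').neg.max continuous_const).mul continuous_const
      · exact (continuous_abs).mul continuous_const
    have hcont_v : Continuous φv := by
      apply Continuous.add
      apply Continuous.sub
      · exact (continuous_const.add continuous_id').max continuous_const |>.mul continuous_const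
      · exact ((continuous_const.add continuous_id').neg.max continuous_const).mul continuous_const
      · exact (continuous_abs).mul continuous_const
    have hIcc : (Set.Icc aLow aHigh).Nonempty := ⟨0, ha1, ha2⟩
    have hcomp_u : IsCompact (φu '' Set.Icc aLow aHigh) := isCompact_Icc.image hcont_u
    have hcomp_v : IsCompact (φv '' Set.Icc aLow aHigh) := isCompact_Icc.image hcont_v
    obtain ⟨a, haI, hamin⟩ : ∃ a ∈ Set.Icc aLow aHigh, φu a = sInf (φu '' Set.Icc aLow aHigh) := by
      have := hcomp_u.sInf_mem (hIcc.image φu)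
      obtain ⟨a, ha, ha2'⟩ := this
      exact ⟨a, ha, ha2'⟩
    have hvle : sInf (φv '' Set.Icc aLow aHigh) ≤ φv a :=
      csInf_le hcomp_v.bddBelow (Set.mem_image_of_mem φv haI)
    -- bound on |a| and on |k*x + a|
    have haabs : |a| ≤ amax := by
      rw [abs_le]
      constructor
      · have := haI.1; simp only [hamax]; cases le_max_iff.mp (le_max_right aHigh (-aLow)) <;> nlinarith [le_max_right aHigh (-aLow)]
      · exact le_trans haI.2 (le_max_left _ _)
    have hxabs : |x| ≤ (I : ℝ) * h1 := by
      rw [hx, abs_mul, abs_of_pos hh1]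
      have : |(i : ℝ)| ≤ (I : ℝ) := by
        rw [← Int.cast_abs]; exact_mod_cast abs_le.mpr ⟨hnode.1, hnode.2.1⟩
      exact mul_le_mul_of_nonneg_right this hh1.le
    set b : ℝ := k * x + a with hb
    have hbabs : |b| ≤ |k| * ((I : ℝ) * h1) + amax := by
      calc |b| ≤ |k * x| + |a| := abs_add_le _ _
        _ ≤ |k| * ((I:ℝ) * h1) + amax := by
            rw [abs_mul]
            exact add_le_add (mul_le_mul_of_nonneg_left hxabs (abs_nonneg k)) haabs
    set bp : ℝ := max b 0 with hbp
    set bm : ℝ := max (-b) 0 with hbm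
    have hbp0 : 0 ≤ bp := le_max_right _ _
    have hbm0 : 0 ≤ bm := le_max_right _ _
    have hbsum : bp + bm = |b| := by
      rcases le_total b 0 with h | h
      · rw [hbp, hbm, max_eq_right h, max_eq_left (by linarith), abs_of_nonpos h]; ring
      · rw [hbp, hbm, max_eq_left h, max_eq_right (by linarith), abs_of_nonneg h]; ring
    -- the per-control constant
    have hCle : β + σ^2 / h1^2 + (bp + bm) / h1 + |a| / h2 ≤ Kh I h1 h2 β σ k aLow aHigh := by
      unfold Kh
      have e1 : β ≤ max 1 β := le_max_right _ _
      have e2 : (bp + bm) / h1 ≤ (|k| * ((I : ℝ) * h1) + amax) / h1 := by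
        rw [hbsum]; gcongr
      have e3 : |a| / h2 ≤ amax / h2 := by gcongr
      linarith
    have hρC : ρ * (β + σ^2 / h1^2 + (bp + bm) / h1 + |a| / h2) ≤ 1 :=
      le_trans (mul_le_mul_of_nonneg_left hCle hρ0.le) hρK
    -- rewrite the goal using the minimizer
    simp only [Euler, Fh, if_pos hint]
    rw [← hx, ← hφu, ← hφv, ← hamin]
    have key : u i j - ρ * (β * u i j - 1
          - σ ^ 2 / (2 * h1 ^ 2) * (u (i + 1) j - 2 * u i j + u (i - 1) j) + φu a)
        ≤ v i j - ρ * (β * v i j - 1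
          - σ ^ 2 / (2 * h1 ^ 2) * (v (i + 1) j - 2 * v i j + v (i - 1) j) + φv a) := by
      have expand : (v i j - ρ * (β * v i j - 1
            - σ ^ 2 / (2 * h1 ^ 2) * (v (i + 1) j - 2 * v i j + v (i - 1) j) + φv a))
          - (u i j - ρ * (β * u i j - 1
            - σ ^ 2 / (2 * h1 ^ 2) * (u (i + 1) j - 2 * u i j + u (i - 1) j) + φu a))
          = (1 - ρ * (β + σ^2 / h1^2 + (bp + bm) / h1 + |a| / h2)) * (v i j - u i j)
            + ρ * (σ^2 / (2 * h1^2) + bm / h1) * (v (i+1) j - u (i+1) j)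
            + ρ * (σ^2 / (2 * h1^2) + bp / h1) * (v (i-1) j - u (i-1) j)
            + ρ * (|a| / h2) * (v i (j-1) - u i (j-1)) := by
        simp only [hφu, hφv, ← hb, ← hbp, ← hbm]
        field_simp
        ring
      have t0 : 0 ≤ (1 - ρ * (β + σ^2 / h1^2 + (bp + bm) / h1 + |a| / h2)) * (v i j - u i j) :=
        mul_nonneg (by linarith) w00
      have t1 : 0 ≤ ρ * (σ^2 / (2 * h1^2) + bm / h1) * (v (i+1) j - u (i+1) j) :=
        mul_nonneg (mul_nonneg hρ0.le (by positivity)) wp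
      have t2 : 0 ≤ ρ * (σ^2 / (2 * h1^2) + bp / h1) * (v (i-1) j - u (i-1) j) :=
        mul_nonneg (mul_nonneg hρ0.le (by positivity)) wm
      have t3 : 0 ≤ ρ * (|a| / h2) * (v i (j-1) - u i (j-1)) :=
        mul_nonneg (mul_nonneg hρ0.le (by positivity)) wd
      linarith [expand, t0, t1, t2, t3]
    calc u i j - ρ * (β * u i j - 1
          - σ ^ 2 / (2 * h1 ^ 2) * (u (i + 1) j - 2 * u i j + u (i - 1) j) + φu a)
        ≤ v i j - ρ * (β * v i j - 1
          - σ ^ 2 / (2 * h1 ^ 2) * (v (i + 1) j - 2 * v i j + v (i - 1) j) + φv a) := key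
      _ ≤ v i j - ρ * (β * v i j - 1
          - σ ^ 2 / (2 * h1 ^ 2) * (v (i + 1) j - 2 * v i j + v (i - 1) j)
          + sInf (φv '' Set.Icc aLow aHigh)) :=
            sub_le_sub_left (mul_le_mul_of_nonneg_left
              (add_le_add_right hvle _) hρ0.le) _
  · -- boundary case
    simp only [Euler, Fh, if_neg hint]
    have h := hle i j hnode
    nlinarith [hle i j hnode]
end

section
/- Let $\beta' = \min\{\beta, 1\}$, $K_h = \max\{1, \beta\} + \frac{\sigma^2}{h_1^2} + \frac{|k| l + a_{\max}}{h_1} + \frac{a_{\max}}{h_2}$ with $a_{\max} = \max\{\overline{a}, -\underline{a}\}$, and let $0 < \rho \le 1/K_h$. Then the Euler map $S_\rho[v] = v - \rho F_h[v]$ satisfies $\|S_\rho[u] - S_\rho[v]\|_\infty \le \gamma \|u - v\|_\infty$ for all mesh functions $u, v$, where $\gamma = \max\{1 - \rho\beta', \rho K_h\}$ and $\|v\|_\infty = \max_{i,j} |v_{i,j}|$. In particular, for $0 < \rho < 1/K_h$ one has $\gamma < 1$ and $S_\rho$ is a strict contraction. -/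
open Set Filter

lemma csInf_image_add_le {S : Set ℝ} (hS : S.Nonempty) {f g : ℝ → ℝ}
    (hbg : BddBelow (g '' S)) (C : ℝ) (h : ∀ a ∈ S, g a + C ≤ f a) :
    sInf (g '' S) + C ≤ sInf (f '' S) := by
  apply le_csInf (hS.image f)
  rintro _ ⟨a, ha, rfl⟩
  exact le_trans (add_le_add_left (csInf_le hbg ⟨a, ha, rfl⟩) C) (h a ha)

set_option maxHeartbeats 1000000 in
/-- Contraction estimate for the Euler map: for `0 < ρ ≤ 1/K_h`,
`‖S_ρ[u] - S_ρ[v]‖_∞ ≤ γ ‖u - v‖_∞` with `γ = max(1 - ρβ', ρK_h)`, `β' = min(β,1)`;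
and for `ρ < 1/K_h` one has `γ < 1`, so `S_ρ` is a strict contraction. -/
theorem stmt10 (I J : ℤ) (hI : 1 ≤ I) (hJ : 1 ≤ J)
    (h1 h2 β σ k aLow aHigh : ℝ)
    (hh1 : 0 < h1) (hh2 : 0 < h2) (hβ : 0 < β) (hσ : 0 < σ)
    (ha1 : aLow ≤ 0) (ha2 : 0 ≤ aHigh)
    (ρ : ℝ) (hρ0 : 0 < ρ) (hρ : ρ ≤ 1 / Kh I h1 h2 β σ k aLow aHigh)
    (g u v : ℤ → ℤ → ℝ) :
    supNorm I J (nodes_nonempty hI hJ)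
        (fun i j => Euler I J h1 h2 β σ k aLow aHigh ρ g u i j
          - Euler I J h1 h2 β σ k aLow aHigh ρ g v i j)
      ≤ max (1 - ρ * min β 1) (ρ * Kh I h1 h2 β σ k aLow aHigh) *
          supNorm I J (nodes_nonempty hI hJ) (fun i j => u i j - v i j) ∧
    (ρ < 1 / Kh I h1 h2 β σ k aLow aHigh →
      max (1 - ρ * min β 1) (ρ * Kh I h1 h2 β σ k aLow aHigh) < 1) := by

  set K := Kh I h1 h2 β σ k aLow aHigh with hK
  have hI1 : (1 : ℝ) ≤ (I : ℝ) := by exact_mod_cast hI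
  have hamax : 0 ≤ max aHigh (-aLow) := le_trans ha2 (le_max_left _ _)
  have hK1 : (1 : ℝ) ≤ K := by
    rw [hK, Kh]
    have t1 : (0:ℝ) ≤ σ ^ 2 / h1 ^ 2 := by positivity
    have t2 : (0:ℝ) ≤ (|k| * ((I : ℝ) * h1) + max aHigh (-aLow)) / h1 := by
      apply div_nonneg _ hh1.le
      have : 0 ≤ |k| * ((I : ℝ) * h1) := by positivity
      linarith
    have t3 : (0:ℝ) ≤ max aHigh (-aLow) / h2 := div_nonneg hamax hh2.le
    have t4 : (1:ℝ) ≤ max 1 β := le_max_left _ _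
    linarith
  have hK0 : (0 : ℝ) < K := lt_of_lt_of_le one_pos hK1
  have hρ1 : ρ ≤ 1 := le_trans hρ (by rw [div_le_one hK0]; exact hK1)
  have hρK : ρ * K ≤ 1 := by
    have := (le_div_iff₀ hK0).mp hρ
    linarith
  set N := supNorm I J (nodes_nonempty hI hJ) (fun i j => u i j - v i j) with hN
  have hmem : ∀ i j : ℤ, -I ≤ i → i ≤ I → 0 ≤ j → j ≤ J → |u i j - v i j| ≤ N := by
    intro i j a b c d
    have hb : (i, j) ∈ nodes I J := by
      simp [nodes, Finset.mem_product, Finset.mem_Icc]; omega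
    exact Finset.le_sup' (fun p => |u p.1 p.2 - v p.1 p.2|) hb
  have hN0 : 0 ≤ N := le_trans (abs_nonneg _) (hmem 0 0 (by omega) (by omega) le_rfl (by omega))
  set γ := max (1 - ρ * min β 1) (ρ * K) with hγ
  have hγ0 : 0 ≤ γ := le_trans (by positivity) (le_max_right _ _)
  constructor
  · apply Finset.sup'_le
    rintro ⟨i, j⟩ hp
    simp only [nodes, Finset.mem_product, Finset.mem_Icc] at hp
    obtain ⟨⟨hi1, hi2⟩, hj1, hj2⟩ := hp
    show |Euler I J h1 h2 β σ k aLow aHigh ρ g u i j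
          - Euler I J h1 h2 β σ k aLow aHigh ρ g v i j| ≤ γ * N
    by_cases hint : IsInterior I J i j
    · -- interior case
      have hii := hint
      obtain ⟨hi1', hi2', hj1', hj2'⟩ := hii
      simp only [Euler, Fh, if_pos hint]
      set φu : ℝ → ℝ := fun a : ℝ =>
          max (k * ((i : ℝ) * h1) + a) 0 * ((u i j - u (i - 1) j) / h1)
          - max (-(k * ((i : ℝ) * h1) + a)) 0 * ((u (i + 1) j - u i j) / h1)
          + |a| * ((u i j - u i (j - 1)) / h2) with hφu
      set φv : ℝ → ℝ := fun a : ℝ =>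
          max (k * ((i : ℝ) * h1) + a) 0 * ((v i j - v (i - 1) j) / h1)
          - max (-(k * ((i : ℝ) * h1) + a)) 0 * ((v (i + 1) j - v i j) / h1)
          + |a| * ((v i j - v i (j - 1)) / h2) with hφv
      have hS : (Set.Icc aLow aHigh).Nonempty := Set.nonempty_Icc.mpr (ha1.trans ha2)
      have hcu : Continuous φu := by rw [hφu]; fun_prop
      have hcv : Continuous φv := by rw [hφv]; fun_prop
      have hbu : BddBelow (φu '' Set.Icc aLow aHigh) :=
        (isCompact_Icc.image hcu).bddBelow
      have hbv : BddBelow (φv '' Set.Icc aLow aHigh) :=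
        (isCompact_Icc.image hcv).bddBelow
      set A := (1 - ρ * β) * (u i j - v i j)
        + ρ * (σ ^ 2 / (2 * h1 ^ 2)) *
          ((u (i+1) j - v (i+1) j) - 2 * (u i j - v i j) + (u (i-1) j - v (i-1) j)) with hA
      have hw0 : |u i j - v i j| ≤ N := hmem i j hi1 hi2 hj1 hj2
      have hwp : |u (i+1) j - v (i+1) j| ≤ N := hmem (i+1) j (by omega) (by omega) hj1 hj2
      have hwm : |u (i-1) j - v (i-1) j| ≤ N := hmem (i-1) j (by omega) (by omega) hj1 hj2
      have hwd : |u i (j-1) - v i (j-1)| ≤ N := hmem i (j-1) hi1 hi2 (by omega) (by omega)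
      have key : ∀ a ∈ Set.Icc aLow aHigh, |A - ρ * (φu a - φv a)| ≤ γ * N := by
        intro a ha
        obtain ⟨hal, har⟩ := ha
        set x := (i : ℝ) * h1 with hx
        set p := max (k * x + a) 0 with hpdef
        set m := max (-(k * x + a)) 0 with hmdef
        set c := σ ^ 2 / (2 * h1 ^ 2) with hc
        have hp0 : 0 ≤ p := le_max_right _ _
        have hm0 : 0 ≤ m := le_max_right _ _
        have hc0 : 0 ≤ c := by positivity
        have hpm : p + m = |k * x + a| := by
          rcases le_total 0 (k * x + a) with h | h
          · rw [abs_of_nonneg h, hpdef, hmdef, max_eq_left h,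
              max_eq_right (neg_nonpos.mpr h)]; ring
          · rw [abs_of_nonpos h, hpdef, hmdef, max_eq_right h,
              max_eq_left (neg_nonneg.mpr h)]; ring
        have habs : |a| ≤ max aHigh (-aLow) := by
          rw [abs_le]
          constructor
          · have : -max aHigh (-aLow) ≤ aLow := by
              have := le_max_right aHigh (-aLow); linarith
            linarith
          · exact le_trans har (le_max_left _ _)
        have hxa : |k * x + a| ≤ |k| * ((I : ℝ) * h1) + max aHigh (-aLow) := by
          have h1' : |k * x + a| ≤ |k * x| + |a| := abs_add_le _ _
          have h2' : |k * x| = |k| * |x| := abs_mul _ _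
          have h3' : |x| ≤ (I : ℝ) * h1 := by
            rw [hx, abs_mul, abs_of_pos hh1]
            have : |(i : ℝ)| ≤ (I : ℝ) := by
              rw [abs_le]; constructor <;> [exact_mod_cast hi1; exact_mod_cast hi2]
            exact mul_le_mul_of_nonneg_right this hh1.le
          have h4' : |k| * |x| ≤ |k| * ((I : ℝ) * h1) :=
            mul_le_mul_of_nonneg_left h3' (abs_nonneg k)
          linarith
        have hsum : β + 2 * c + (p + m) / h1 + |a| / h2 ≤ K := by
          have h2c : 2 * c = σ ^ 2 / h1 ^ 2 := by rw [hc]; ring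
          rw [h2c, hpm, hK, Kh]
          gcongr
          · exact le_max_right _ _
        have hρsum : ρ * (β + 2 * c + (p + m) / h1 + |a| / h2) ≤ 1 :=
          le_trans (mul_le_mul_of_nonneg_left hsum hρ0.le) hρK
        set c0 := 1 - ρ * (β + 2 * c + (p + m) / h1 + |a| / h2) with hc0def
        set c1 := ρ * c + ρ * m / h1 with hc1def
        set c2 := ρ * c + ρ * p / h1 with hc2def
        set c3 := ρ * |a| / h2 with hc3def
        have hc00 : 0 ≤ c0 := by rw [hc0def]; linarith
        have hc10 : 0 ≤ c1 := by
          rw [hc1def]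
          exact add_nonneg (mul_nonneg hρ0.le hc0) (div_nonneg (mul_nonneg hρ0.le hm0) hh1.le)
        have hc20 : 0 ≤ c2 := by
          rw [hc2def]
          exact add_nonneg (mul_nonneg hρ0.le hc0) (div_nonneg (mul_nonneg hρ0.le hp0) hh1.le)
        have hc30 : 0 ≤ c3 := by
          rw [hc3def]
          exact div_nonneg (mul_nonneg hρ0.le (abs_nonneg a)) hh2.le
        have hrw : A - ρ * (φu a - φv a)
            = c0 * (u i j - v i j) + c1 * (u (i+1) j - v (i+1) j)
              + c2 * (u (i-1) j - v (i-1) j) + c3 * (u i (j-1) - v i (j-1)) := by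
          simp only [hA, hφu, hφv, hc0def, hc1def, hc2def, hc3def, hc]
          ring
        rw [hrw]
        have tri : |c0 * (u i j - v i j) + c1 * (u (i+1) j - v (i+1) j)
              + c2 * (u (i-1) j - v (i-1) j) + c3 * (u i (j-1) - v i (j-1))|
            ≤ |c0 * (u i j - v i j)| + |c1 * (u (i+1) j - v (i+1) j)|
              + |c2 * (u (i-1) j - v (i-1) j)| + |c3 * (u i (j-1) - v i (j-1))| := by
          calc |c0 * (u i j - v i j) + c1 * (u (i+1) j - v (i+1) j)
                + c2 * (u (i-1) j - v (i-1) j) + c3 * (u i (j-1) - v i (j-1))|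
              ≤ |c0 * (u i j - v i j) + c1 * (u (i+1) j - v (i+1) j)
                + c2 * (u (i-1) j - v (i-1) j)| + |c3 * (u i (j-1) - v i (j-1))| :=
              abs_add_le _ _
            _ ≤ (|c0 * (u i j - v i j) + c1 * (u (i+1) j - v (i+1) j)|
                + |c2 * (u (i-1) j - v (i-1) j)|) + |c3 * (u i (j-1) - v i (j-1))| :=
              add_le_add_left (abs_add_le _ _) _
            _ ≤ _ := by
              have := abs_add_le (c0 * (u i j - v i j)) (c1 * (u (i+1) j - v (i+1) j))
              linarith
        have e0 : |c0 * (u i j - v i j)| ≤ c0 * N := by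
          rw [abs_mul, abs_of_nonneg hc00]; exact mul_le_mul_of_nonneg_left hw0 hc00
        have e1 : |c1 * (u (i+1) j - v (i+1) j)| ≤ c1 * N := by
          rw [abs_mul, abs_of_nonneg hc10]; exact mul_le_mul_of_nonneg_left hwp hc10
        have e2 : |c2 * (u (i-1) j - v (i-1) j)| ≤ c2 * N := by
          rw [abs_mul, abs_of_nonneg hc20]; exact mul_le_mul_of_nonneg_left hwm hc20
        have e3 : |c3 * (u i (j-1) - v i (j-1))| ≤ c3 * N := by
          rw [abs_mul, abs_of_nonneg hc30]; exact mul_le_mul_of_nonneg_left hwd hc30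
        have hsum4 : c0 * N + c1 * N + c2 * N + c3 * N = (1 - ρ * β) * N := by
          rw [hc0def, hc1def, hc2def, hc3def]; ring
        have hfin : (1 - ρ * β) * N ≤ γ * N := by
          apply mul_le_mul_of_nonneg_right _ hN0
          have hmin : min β 1 ≤ β := min_le_left _ _
          have : 1 - ρ * β ≤ 1 - ρ * min β 1 := by
            have := mul_le_mul_of_nonneg_left hmin hρ0.le
            linarith
          exact le_trans this (le_max_left _ _)
        linarith
      set Su := sInf (φu '' Set.Icc aLow aHigh) with hSu
      set Sv := sInf (φv '' Set.Icc aLow aHigh) with hSv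
      have low : Sv + (A - γ * N) / ρ ≤ Su := by
        apply csInf_image_add_le hS hbv
        intro a ha
        have h := (abs_le.mp (key a ha)).2
        have hd : (A - γ * N) / ρ ≤ φu a - φv a := by
          rw [div_le_iff₀ hρ0, mul_comm]; linarith
        linarith
      have high : Su + (-((A + γ * N) / ρ)) ≤ Sv := by
        apply csInf_image_add_le hS hbu
        intro a ha
        have h := (abs_le.mp (key a ha)).1
        have hd : φu a - φv a ≤ (A + γ * N) / ρ := by
          rw [le_div_iff₀ hρ0, mul_comm]; linarith
        linarith
      have hEd : (u i j - ρ * (β * u i j - 1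
            - σ ^ 2 / (2 * h1 ^ 2) * (u (i+1) j - 2 * u i j + u (i-1) j) + Su))
          - (v i j - ρ * (β * v i j - 1
            - σ ^ 2 / (2 * h1 ^ 2) * (v (i+1) j - 2 * v i j + v (i-1) j) + Sv))
          = A - ρ * (Su - Sv) := by rw [hA]; ring
      rw [hEd, abs_le]
      have hl : (A - γ * N) / ρ ≤ Su - Sv := by linarith
      have hh' : Su - Sv ≤ (A + γ * N) / ρ := by linarith
      rw [div_le_iff₀ hρ0, mul_comm] at hl
      rw [le_div_iff₀ hρ0, mul_comm] at hh'
      constructor <;> linarith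
    · -- boundary case
      simp only [Euler, Fh, if_neg hint]
      have hr : u i j - ρ * (u i j - g i j) - (v i j - ρ * (v i j - g i j))
          = (1 - ρ) * (u i j - v i j) := by ring
      rw [hr, abs_mul, abs_of_nonneg (by linarith : (0:ℝ) ≤ 1 - ρ)]
      have hb1 : 1 - ρ ≤ γ := by
        have : ρ * min β 1 ≤ ρ := by
          have := mul_le_mul_of_nonneg_left (min_le_right β 1) hρ0.le
          linarith
        exact le_trans (by linarith) (le_max_left _ _)
      exact mul_le_mul hb1 (hmem i j hi1 hi2 hj1 hj2) (abs_nonneg _) hγ0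
  · intro hlt
    have hb1 : ρ * K < 1 := by
      have := (lt_div_iff₀ hK0).mp hlt
      linarith
    have hb2 : 1 - ρ * min β 1 < 1 := by
      have : 0 < ρ * min β 1 := mul_pos hρ0 (lt_min hβ one_pos)
      linarith
    exact max_lt hb2 hb1
end

section
/- Let $\beta' = \min\{\beta, 1\}$, $K_h = \max\{1, \beta\} + \frac{\sigma^2}{h_1^2} + \frac{|k| l + a_{\max}}{h_1} + \frac{a_{\max}}{h_2}$ with $a_{\max} = \max\{\overline{a}, -\underline{a}\}$, and fix $0 < \rho < 1/K_h$, so that $\gamma = \max\{1 - \rho\beta', \rho K_h\} < 1$. Then there exists a unique mesh function $v_h$ with $F_h[v_h](i,j) = 0$ at every node $(i,j)$; $v_h$ is the unique fixed point of the Euler map $S_\rho[v] = v - \rho F_h[v]$; and for any initial mesh function $v^0$, the iterates $v^{n+1} = S_\rho[v^n]$ satisfy $\|v^n - v_h\|_\infty \le \gamma^n \|v^0 - v_h\|_\infty \to 0$ as $n \to \infty$. -/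
open Set Filter

lemma abs_comb4 (c1 c2 c3 c4 x1 x2 x3 x4 M γ : ℝ)
    (hc1 : 0 ≤ c1) (hc2 : 0 ≤ c2) (hc3 : 0 ≤ c3) (hc4 : 0 ≤ c4)
    (hsum : c1 + c2 + c3 + c4 ≤ γ) (hM : 0 ≤ M)
    (h1 : |x1| ≤ M) (h2 : |x2| ≤ M) (h3 : |x3| ≤ M) (h4 : |x4| ≤ M) :
    |c1 * x1 + c2 * x2 + c3 * x3 + c4 * x4| ≤ γ * M := by
  rw [abs_le] at h1 h2 h3 h4 ⊢
  constructor <;> nlinarith [mul_le_mul_of_nonneg_left h1.2 hc1, mul_le_mul_of_nonneg_left h2.2 hc2,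
    mul_le_mul_of_nonneg_left h3.2 hc3, mul_le_mul_of_nonneg_left h4.2 hc4,
    mul_le_mul_of_nonneg_left h1.1 hc1, mul_le_mul_of_nonneg_left h2.1 hc2,
    mul_le_mul_of_nonneg_left h3.1 hc3, mul_le_mul_of_nonneg_left h4.1 hc4]

lemma Texpr_bound (ρ c h1 h2 β p m q M γ v0 vp vm vq w0 wp wm wq : ℝ)
    (hρ : 0 ≤ ρ) (hc : 0 ≤ c) (hh1 : 0 < h1) (hh2 : 0 < h2) (hM : 0 ≤ M)
    (hp : 0 ≤ p) (hm : 0 ≤ m) (hq : 0 ≤ q)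
    (hK : ρ * (β + 2 * c + (p + m) / h1 + q / h2) ≤ 1)
    (hγ : 1 - ρ * β ≤ γ)
    (h0 : |v0 - w0| ≤ M) (hP : |vp - wp| ≤ M) (hQ : |vm - wm| ≤ M) (hR : |vq - wq| ≤ M) :
    |(1 - ρ * β) * (v0 - w0) + ρ * c * ((vp - wp) - 2 * (v0 - w0) + (vm - wm))
      - ρ * ((p * ((v0 - vm) / h1) - m * ((vp - v0) / h1) + q * ((v0 - vq) / h2))
           - (p * ((w0 - wm) / h1) - m * ((wp - w0) / h1) + q * ((w0 - wq) / h2)))| ≤ γ * M := by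
  have hKexp : ρ * β + ρ * (2 * c) + ρ * ((p + m) / h1) + ρ * (q / h2) ≤ 1 := by
    nlinarith [hK]
  set c1 : ℝ := 1 - ρ * β - ρ * (2 * c) - ρ * ((p + m) / h1) - ρ * (q / h2) with hc1def
  set c2 : ℝ := ρ * c + ρ * (m / h1) with hc2def
  set c3 : ℝ := ρ * c + ρ * (p / h1) with hc3def
  set c4 : ℝ := ρ * (q / h2) with hc4def
  have e : (1 - ρ * β) * (v0 - w0) + ρ * c * ((vp - wp) - 2 * (v0 - w0) + (vm - wm))
      - ρ * ((p * ((v0 - vm) / h1) - m * ((vp - v0) / h1) + q * ((v0 - vq) / h2))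
           - (p * ((w0 - wm) / h1) - m * ((wp - w0) / h1) + q * ((w0 - wq) / h2)))
      = c1 * (v0 - w0) + c2 * (vp - wp) + c3 * (vm - wm) + c4 * (vq - wq) := by
    rw [hc1def, hc2def, hc3def, hc4def]; field_simp; ring
  clear_value c1 c2 c3 c4
  rw [e]
  refine abs_comb4 _ _ _ _ _ _ _ _ _ _ ?_ ?_ ?_ ?_ ?_ hM h0 hP hQ hR
  · linarith
  · rw [hc2def]; exact add_nonneg (mul_nonneg hρ hc) (mul_nonneg hρ (div_nonneg hm hh1.le))
  · rw [hc3def]; exact add_nonneg (mul_nonneg hρ hc) (mul_nonneg hρ (div_nonneg hp hh1.le))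
  · rw [hc4def]; exact mul_nonneg hρ (div_nonneg hq hh2.le)
  · have : c1 + c2 + c3 + c4 = 1 - ρ * β := by
      rw [hc1def, hc2def, hc3def, hc4def]; field_simp; ring
    linarith

lemma sInf_diff_bound (fv fw : ℝ → ℝ) (hfv : Continuous fv) (hfw : Continuous fw)
    (lo hi : ℝ) (hlohi : lo ≤ hi) (ρ B C : ℝ) (hρ : 0 ≤ ρ)
    (h : ∀ a ∈ Set.Icc lo hi, |B - ρ * (fv a - fw a)| ≤ C) :
    |B - ρ * (sInf (fv '' Set.Icc lo hi) - sInf (fw '' Set.Icc lo hi))| ≤ C := by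
  have hne : (Set.Icc lo hi).Nonempty := Set.nonempty_Icc.mpr hlohi
  obtain ⟨av, havm, havmin⟩ := isCompact_Icc.exists_isMinOn hne hfv.continuousOn
  obtain ⟨aw, hawm, hawmin⟩ := isCompact_Icc.exists_isMinOn hne hfw.continuousOn
  have hIv : sInf (fv '' Set.Icc lo hi) = fv av :=
    IsLeast.csInf_eq ⟨Set.mem_image_of_mem fv havm, by rintro y ⟨b, hb, rfl⟩; exact havmin hb⟩
  have hIw : sInf (fw '' Set.Icc lo hi) = fw aw :=
    IsLeast.csInf_eq ⟨Set.mem_image_of_mem fw hawm, by rintro y ⟨b, hb, rfl⟩; exact hawmin hb⟩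
  rw [hIv, hIw, abs_le]
  have hv := abs_le.mp (h av havm)
  have hw := abs_le.mp (h aw hawm)
  have e1 : ρ * fw aw ≤ ρ * fw av := mul_le_mul_of_nonneg_left (hawmin havm) hρ
  have e2 : ρ * fv av ≤ ρ * fv aw := mul_le_mul_of_nonneg_left (havmin hawm) hρ
  constructor <;> nlinarith [hv.1, hv.2, hw.1, hw.2]

lemma Kh_ge_one (I : ℤ) (hI : 1 ≤ I) (h1 h2 β σ k aLow aHigh : ℝ)
    (hh1 : 0 < h1) (hh2 : 0 < h2) (ha1 : aLow ≤ 0) (ha2 : 0 ≤ aHigh) :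
    1 ≤ Kh I h1 h2 β σ k aLow aHigh := by
  have hIpos : (0:ℝ) ≤ (I:ℝ) := by exact_mod_cast (by omega : (0:ℤ) ≤ I)
  have hamax : (0:ℝ) ≤ max aHigh (-aLow) := le_trans ha2 (le_max_left _ _)
  have t1 : (1:ℝ) ≤ max 1 β := le_max_left _ _
  have t2 : (0:ℝ) ≤ σ ^ 2 / h1 ^ 2 := by positivity
  have t3 : (0:ℝ) ≤ (|k| * ((I:ℝ) * h1) + max aHigh (-aLow)) / h1 :=
    div_nonneg (add_nonneg (mul_nonneg (abs_nonneg k) (mul_nonneg hIpos hh1.le)) hamax) hh1.le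
  have t4 : (0:ℝ) ≤ max aHigh (-aLow) / h2 := div_nonneg hamax hh2.le
  unfold Kh; linarith

lemma key_est (I J : ℤ) (hI : 1 ≤ I) (h1 h2 β σ k aLow aHigh ρ : ℝ)
    (hh1 : 0 < h1) (hh2 : 0 < h2) (hβ : 0 < β) (ha1 : aLow ≤ 0) (ha2 : 0 ≤ aHigh)
    (hρ0 : 0 < ρ) (hρK : ρ * Kh I h1 h2 β σ k aLow aHigh < 1)
    (g v w : ℤ → ℤ → ℝ) (M : ℝ) (hM : 0 ≤ M)
    (hd : ∀ i j, IsNode I J i j → |v i j - w i j| ≤ M)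
    (i j : ℤ) (hn : IsNode I J i j) :
    |Euler I J h1 h2 β σ k aLow aHigh ρ g v i j - Euler I J h1 h2 β σ k aLow aHigh ρ g w i j|
      ≤ max (1 - ρ * min β 1) (ρ * Kh I h1 h2 β σ k aLow aHigh) * M := by
  have hKh1 := Kh_ge_one I hI h1 h2 β σ k aLow aHigh hh1 hh2 ha1 ha2
  set Γ : ℝ := max (1 - ρ * min β 1) (ρ * Kh I h1 h2 β σ k aLow aHigh) with hΓdef
  have hρ1 : ρ ≤ 1 := by nlinarith
  have hΓ1 : 1 - ρ ≤ Γ := by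
    have : min β 1 ≤ 1 := min_le_right _ _
    have : 1 - ρ * min β 1 ≤ Γ := le_max_left _ _
    nlinarith [min_le_right β 1, hρ0.le]
  have hΓβ : 1 - ρ * β ≤ Γ := by
    have h1' : 1 - ρ * min β 1 ≤ Γ := le_max_left _ _
    nlinarith [min_le_left β 1, hρ0.le]
  have hΓ0 : 0 ≤ Γ := le_trans (by nlinarith) (le_max_right _ _)
  by_cases hint : IsInterior I J i j
  · -- interior case
    obtain ⟨q1, q2, q3, q4⟩ := hint
    have hnode0 : IsNode I J i j := hn
    have hd0 := hd i j hn
    have hdp := hd (i+1) j ⟨by omega, by omega, by omega, by omega⟩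
    have hdm := hd (i-1) j ⟨by omega, by omega, by omega, by omega⟩
    have hdq := hd i (j-1) ⟨by omega, by omega, by omega, by omega⟩
    have hcv : Continuous (fun a : ℝ =>
        max (k * ((i : ℝ) * h1) + a) 0 * ((v i j - v (i - 1) j) / h1)
        - max (-(k * ((i : ℝ) * h1) + a)) 0 * ((v (i + 1) j - v i j) / h1)
        + |a| * ((v i j - v i (j - 1)) / h2)) := by fun_prop
    have hcw : Continuous (fun a : ℝ =>
        max (k * ((i : ℝ) * h1) + a) 0 * ((w i j - w (i - 1) j) / h1)
        - max (-(k * ((i : ℝ) * h1) + a)) 0 * ((w (i + 1) j - w i j) / h1)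
        + |a| * ((w i j - w i (j - 1)) / h2)) := by fun_prop
    have hE : Euler I J h1 h2 β σ k aLow aHigh ρ g v i j - Euler I J h1 h2 β σ k aLow aHigh ρ g w i j
        = ((1 - ρ * β) * (v i j - w i j)
            + ρ * (σ ^ 2 / (2 * h1 ^ 2)) * ((v (i+1) j - w (i+1) j) - 2 * (v i j - w i j) + (v (i-1) j - w (i-1) j)))
          - ρ * (sInf ((fun a : ℝ =>
              max (k * ((i : ℝ) * h1) + a) 0 * ((v i j - v (i - 1) j) / h1)
              - max (-(k * ((i : ℝ) * h1) + a)) 0 * ((v (i + 1) j - v i j) / h1)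
              + |a| * ((v i j - v i (j - 1)) / h2)) '' Set.Icc aLow aHigh)
            - sInf ((fun a : ℝ =>
              max (k * ((i : ℝ) * h1) + a) 0 * ((w i j - w (i - 1) j) / h1)
              - max (-(k * ((i : ℝ) * h1) + a)) 0 * ((w (i + 1) j - w i j) / h1)
              + |a| * ((w i j - w i (j - 1)) / h2)) '' Set.Icc aLow aHigh)) := by
      simp only [Euler, Fh, if_pos (⟨q1, q2, q3, q4⟩ : IsInterior I J i j)]
      ring
    rw [hE]
    apply sInf_diff_bound _ _ hcv hcw aLow aHigh (le_trans ha1 ha2) ρ _ _ hρ0.le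
    intro a ha
    have hIpos : (0:ℝ) ≤ (I:ℝ) := by exact_mod_cast (by omega : (0:ℤ) ≤ I)
    have hiI : |(i:ℝ)| ≤ (I:ℝ) := by
      rw [abs_le]; constructor <;> [skip; skip] <;> exact_mod_cast (by omega : _)
    have hamax : (0:ℝ) ≤ max aHigh (-aLow) := le_trans ha2 (le_max_left _ _)
    have haamax : |a| ≤ max aHigh (-aLow) := by
      rw [abs_le]; constructor
      · have := ha.1; have : -max aHigh (-aLow) ≤ aLow := by
          have := neg_le_neg (le_max_right aHigh (-aLow)); linarith
        linarith [ha.1]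
      · exact le_trans ha.2 (le_max_left _ _)
    have hpm : max (k * ((i : ℝ) * h1) + a) 0 + max (-(k * ((i : ℝ) * h1) + a)) 0
        = |k * ((i : ℝ) * h1) + a| := max_zero_add_max_neg_zero_eq_abs_self _
    have habs : |k * ((i : ℝ) * h1) + a| ≤ |k| * ((I:ℝ) * h1) + max aHigh (-aLow) := by
      calc |k * ((i : ℝ) * h1) + a| ≤ |k * ((i : ℝ) * h1)| + |a| := abs_add_le _ _
        _ ≤ |k| * ((I:ℝ) * h1) + max aHigh (-aLow) := by
            rw [abs_mul, abs_mul, abs_of_pos hh1]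
            have : |k| * (|(i:ℝ)| * h1) ≤ |k| * ((I:ℝ) * h1) :=
              mul_le_mul_of_nonneg_left (mul_le_mul_of_nonneg_right hiI hh1.le) (abs_nonneg k)
            linarith
    have hKa : ρ * (β + 2 * (σ ^ 2 / (2 * h1 ^ 2))
        + (max (k * ((i : ℝ) * h1) + a) 0 + max (-(k * ((i : ℝ) * h1) + a)) 0) / h1
        + |a| / h2) ≤ 1 := by
      have step : β + 2 * (σ ^ 2 / (2 * h1 ^ 2))
          + (max (k * ((i : ℝ) * h1) + a) 0 + max (-(k * ((i : ℝ) * h1) + a)) 0) / h1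
          + |a| / h2 ≤ Kh I h1 h2 β σ k aLow aHigh := by
        have e2 : 2 * (σ ^ 2 / (2 * h1 ^ 2)) = σ ^ 2 / h1 ^ 2 := by ring
        have t1 : β ≤ max 1 β := le_max_right _ _
        have t3 : (max (k * ((i : ℝ) * h1) + a) 0 + max (-(k * ((i : ℝ) * h1) + a)) 0) / h1
            ≤ (|k| * ((I:ℝ) * h1) + max aHigh (-aLow)) / h1 := by
          rw [hpm]; gcongr
        have t4 : |a| / h2 ≤ max aHigh (-aLow) / h2 := by gcongr
        unfold Kh; linarith
      nlinarith [mul_le_mul_of_nonneg_left step hρ0.le]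
    show _ ≤ _
    exact Texpr_bound ρ (σ ^ 2 / (2 * h1 ^ 2)) h1 h2 β
      (max (k * ((i : ℝ) * h1) + a) 0) (max (-(k * ((i : ℝ) * h1) + a)) 0) (|a|) M Γ
      (v i j) (v (i+1) j) (v (i-1) j) (v i (j-1)) (w i j) (w (i+1) j) (w (i-1) j) (w i (j-1))
      hρ0.le (by positivity) hh1 hh2 hM (le_max_right _ _) (le_max_right _ _) (abs_nonneg a)
      hKa hΓβ hd0 hdp hdm hdq
  · -- boundary case
    have hE : Euler I J h1 h2 β σ k aLow aHigh ρ g v i j - Euler I J h1 h2 β σ k aLow aHigh ρ g w i j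
        = (1 - ρ) * (v i j - w i j) := by
      simp only [Euler, Fh, if_neg hint]; ring
    rw [hE, abs_mul, abs_of_nonneg (by linarith : (0:ℝ) ≤ 1 - ρ)]
    have := hd i j hn
    nlinarith [abs_nonneg (v i j - w i j)]

lemma mem_nodes {I J : ℤ} (p : ℤ × ℤ) : p ∈ nodes I J ↔ IsNode I J p.1 p.2 := by
  cases p with
  | mk i j => simp [nodes, Finset.mem_Icc, IsNode, and_assoc]

/-- Extension of a grid function to all of `ℤ × ℤ` by zero. -/
noncomputable def extFn (I J : ℤ) (u : ↥(nodes I J) → ℝ) : ℤ → ℤ → ℝ :=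
  fun i j => if h : (i, j) ∈ nodes I J then u ⟨(i, j), h⟩ else 0

/-- The Euler map as a self-map of the (finite-dimensional) space of grid functions. -/
noncomputable def TMap (I J : ℤ) (h1 h2 β σ k aLow aHigh ρ : ℝ) (g : ℤ → ℤ → ℝ)
    (u : ↥(nodes I J) → ℝ) : ↥(nodes I J) → ℝ :=
  fun p => Euler I J h1 h2 β σ k aLow aHigh ρ g (extFn I J u) p.1.1 p.1.2

lemma supNorm_nonneg (I J : ℤ) (hne : (nodes I J).Nonempty) (v : ℤ → ℤ → ℝ) :
    0 ≤ supNorm I J hne v := by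
  unfold supNorm
  exact le_trans (abs_nonneg _) (Finset.le_sup' (fun p => |v p.1 p.2|) hne.choose_spec)

lemma abs_le_supNorm (I J : ℤ) (hne : (nodes I J).Nonempty) (v : ℤ → ℤ → ℝ) (i j : ℤ)
    (hn : IsNode I J i j) : |v i j| ≤ supNorm I J hne v := by
  unfold supNorm
  exact Finset.le_sup' (fun p => |v p.1 p.2|) ((mem_nodes (i, j)).mpr hn)

lemma supNorm_le (I J : ℤ) (hne : (nodes I J).Nonempty) (v : ℤ → ℤ → ℝ) (C : ℝ)
    (h : ∀ i j, IsNode I J i j → |v i j| ≤ C) : supNorm I J hne v ≤ C := by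
  unfold supNorm
  exact Finset.sup'_le _ _ (fun p hp => h p.1 p.2 ((mem_nodes p).mp hp))

/-- For `0 < ρ < 1/K_h` (so `γ = max(1-ρβ', ρK_h) < 1`): there is a mesh function
`v_h` with `F_h[v_h] = 0` at all nodes, unique on the grid; `v_h` is the unique
fixed point of the Euler map `S_ρ` on the grid; and the Euler iterates
`v^{n+1} = S_ρ[v^n]` from any `v⁰` satisfy `‖v^n - v_h‖_∞ ≤ γⁿ ‖v⁰ - v_h‖_∞ → 0`. -/
theorem stmt11 (I J : ℤ) (hI : 1 ≤ I) (hJ : 1 ≤ J)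
    (h1 h2 β σ k aLow aHigh : ℝ)
    (hh1 : 0 < h1) (hh2 : 0 < h2) (hβ : 0 < β) (hσ : 0 < σ)
    (ha1 : aLow ≤ 0) (ha2 : 0 ≤ aHigh)
    (ρ : ℝ) (hρ0 : 0 < ρ) (hρ : ρ < 1 / Kh I h1 h2 β σ k aLow aHigh)
    (g : ℤ → ℤ → ℝ) :
    ∃ vh : ℤ → ℤ → ℝ,
      (∀ i j, IsNode I J i j → Fh I J h1 h2 β σ k aLow aHigh g vh i j = 0) ∧
      (∀ v' : ℤ → ℤ → ℝ,
        (∀ i j, IsNode I J i j → Fh I J h1 h2 β σ k aLow aHigh g v' i j = 0) →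
        ∀ i j, IsNode I J i j → v' i j = vh i j) ∧
      (∀ i j, IsNode I J i j →
        Euler I J h1 h2 β σ k aLow aHigh ρ g vh i j = vh i j) ∧
      (∀ v' : ℤ → ℤ → ℝ,
        (∀ i j, IsNode I J i j →
          Euler I J h1 h2 β σ k aLow aHigh ρ g v' i j = v' i j) →
        ∀ i j, IsNode I J i j → v' i j = vh i j) ∧
      (∀ v0 : ℤ → ℤ → ℝ, ∀ vseq : ℕ → ℤ → ℤ → ℝ, vseq 0 = v0 →
        (∀ n, vseq (n + 1) = fun i j => Euler I J h1 h2 β σ k aLow aHigh ρ g (vseq n) i j) →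
        (∀ n, supNorm I J (nodes_nonempty hI hJ) (fun i j => vseq n i j - vh i j)
            ≤ max (1 - ρ * min β 1) (ρ * Kh I h1 h2 β σ k aLow aHigh) ^ n *
                supNorm I J (nodes_nonempty hI hJ) (fun i j => v0 i j - vh i j)) ∧
        Tendsto (fun n => supNorm I J (nodes_nonempty hI hJ)
            (fun i j => vseq n i j - vh i j)) atTop (nhds 0)) := by
  have hne : (nodes I J).Nonempty := nodes_nonempty hI hJ
  have hKh1 := Kh_ge_one I hI h1 h2 β σ k aLow aHigh hh1 hh2 ha1 ha2
  have hKhpos : 0 < Kh I h1 h2 β σ k aLow aHigh := by linarith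
  have hρK : ρ * Kh I h1 h2 β σ k aLow aHigh < 1 := (lt_div_iff₀ hKhpos).mp hρ
  set Γ : ℝ := max (1 - ρ * min β 1) (ρ * Kh I h1 h2 β σ k aLow aHigh) with hΓdef
  have hΓ0 : 0 ≤ Γ := le_trans (mul_nonneg hρ0.le hKhpos.le) (le_max_right _ _)
  have hΓlt1 : Γ < 1 := by
    apply max_lt ?_ hρK
    have : 0 < min β 1 := lt_min hβ one_pos
    nlinarith
  haveI : Nonempty ↥(nodes I J) := ⟨⟨hne.choose, hne.choose_spec⟩⟩
  have lip : ∀ u u' : ↥(nodes I J) → ℝ,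
      dist (TMap I J h1 h2 β σ k aLow aHigh ρ g u) (TMap I J h1 h2 β σ k aLow aHigh ρ g u')
        ≤ Γ * dist u u' := by
    intro u u'
    have hMnn : (0:ℝ) ≤ dist u u' := dist_nonneg
    rw [dist_pi_le_iff (mul_nonneg hΓ0 hMnn)]
    intro b
    rw [Real.dist_eq]
    apply key_est I J hI h1 h2 β σ k aLow aHigh ρ hh1 hh2 hβ ha1 ha2 hρ0 hρK g _ _ _ hMnn
    · intro i j hn
      have hm := (mem_nodes (i, j)).mpr hn
      show |extFn I J u i j - extFn I J u' i j| ≤ dist u u'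
      simp only [extFn, dif_pos hm]
      rw [← Real.dist_eq]
      exact dist_le_pi_dist u u' ⟨(i, j), hm⟩
    · exact (mem_nodes b.1).mp b.2
  have hcontr : ContractingWith ⟨Γ, hΓ0⟩ (TMap I J h1 h2 β σ k aLow aHigh ρ g) :=
    ⟨by exact_mod_cast hΓlt1, LipschitzWith.of_dist_le_mul lip⟩
  set ustar := hcontr.fixedPoint (TMap I J h1 h2 β σ k aLow aHigh ρ g) with hustar
  have hfixed : TMap I J h1 h2 β σ k aLow aHigh ρ g ustar = ustar := hcontr.fixedPoint_isFixedPt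
  have hEulerFix : ∀ i j, IsNode I J i j →
      Euler I J h1 h2 β σ k aLow aHigh ρ g (extFn I J ustar) i j = extFn I J ustar i j := by
    intro i j hn
    have hm := (mem_nodes (i, j)).mpr hn
    have hTfix : TMap I J h1 h2 β σ k aLow aHigh ρ g ustar ⟨(i, j), hm⟩ = ustar ⟨(i, j), hm⟩ :=
      congrFun hfixed _
    have e1 : extFn I J ustar i j = ustar ⟨(i, j), hm⟩ := dif_pos hm
    rw [e1, ← hTfix]; rfl
  have huniq : ∀ v' : ℤ → ℤ → ℝ,
      (∀ i j, IsNode I J i j → Euler I J h1 h2 β σ k aLow aHigh ρ g v' i j = v' i j) →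
      ∀ i j, IsNode I J i j → v' i j = extFn I J ustar i j := by
    intro v' hv'
    have hM'0 : 0 ≤ supNorm I J hne (fun i j => v' i j - extFn I J ustar i j) :=
      supNorm_nonneg I J hne _
    have hdb : ∀ i j, IsNode I J i j → |v' i j - extFn I J ustar i j| ≤
        supNorm I J hne (fun i j => v' i j - extFn I J ustar i j) := fun i j hn =>
      abs_le_supNorm I J hne (fun i j => v' i j - extFn I J ustar i j) i j hn
    have hstep : ∀ i j, IsNode I J i j → |v' i j - extFn I J ustar i j| ≤
        Γ * supNorm I J hne (fun i j => v' i j - extFn I J ustar i j) := by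
      intro i j hn
      have h := key_est I J hI h1 h2 β σ k aLow aHigh ρ hh1 hh2 hβ ha1 ha2 hρ0 hρK g
        v' (extFn I J ustar) _ hM'0 hdb i j hn
      rwa [hv' i j hn, hEulerFix i j hn] at h
    have hle : supNorm I J hne (fun i j => v' i j - extFn I J ustar i j) ≤
        Γ * supNorm I J hne (fun i j => v' i j - extFn I J ustar i j) :=
      supNorm_le I J hne _ _ hstep
    have hM0 : supNorm I J hne (fun i j => v' i j - extFn I J ustar i j) ≤ 0 := by nlinarith
    intro i j hn
    exact sub_eq_zero.mp (abs_nonpos_iff.mp (le_trans (hdb i j hn) hM0))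
  refine ⟨extFn I J ustar, ?_, ?_, hEulerFix, huniq, ?_⟩
  · -- Fh = 0 at nodes
    intro i j hn
    have h := hEulerFix i j hn
    have h2' : ρ * Fh I J h1 h2 β σ k aLow aHigh g (extFn I J ustar) i j = 0 := by
      simp only [Euler] at h; linarith
    exact (mul_eq_zero.mp h2').resolve_left (ne_of_gt hρ0)
  · -- uniqueness of Fh-solutions
    intro v' hv'
    apply huniq
    intro i j hn
    simp only [Euler, hv' i j hn, mul_zero, sub_zero]
  · -- iterates
    intro v0 vseq h0 hrec
    have hS0 : 0 ≤ supNorm I J (nodes_nonempty hI hJ)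
        (fun i j => v0 i j - extFn I J ustar i j) :=
      supNorm_nonneg I J _ _
    have hbound : ∀ n, supNorm I J (nodes_nonempty hI hJ)
        (fun i j => vseq n i j - extFn I J ustar i j) ≤
        Γ ^ n * supNorm I J (nodes_nonempty hI hJ) (fun i j => v0 i j - extFn I J ustar i j) := by
      intro n
      induction n with
      | zero => rw [h0, pow_zero, one_mul]
      | succ n ih =>
        have hMn : 0 ≤ Γ ^ n * supNorm I J (nodes_nonempty hI hJ)
            (fun i j => v0 i j - extFn I J ustar i j) := mul_nonneg (pow_nonneg hΓ0 n) hS0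
        have hdb : ∀ i j, IsNode I J i j → |vseq n i j - extFn I J ustar i j| ≤
            Γ ^ n * supNorm I J (nodes_nonempty hI hJ)
              (fun i j => v0 i j - extFn I J ustar i j) := fun i j hn =>
          le_trans (abs_le_supNorm I J (nodes_nonempty hI hJ) (fun i j => vseq n i j - extFn I J ustar i j) i j hn) ih
        apply supNorm_le
        intro i' j' hn'
        have hkey := key_est I J hI h1 h2 β σ k aLow aHigh ρ hh1 hh2 hβ ha1 ha2 hρ0 hρK g
          (vseq n) (extFn I J ustar) _ hMn hdb i' j' hn'
        rw [hEulerFix i' j' hn'] at hkey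
        show |vseq (n + 1) i' j' - extFn I J ustar i' j'| ≤ _
        rw [hrec n]
        calc |Euler I J h1 h2 β σ k aLow aHigh ρ g (vseq n) i' j' - extFn I J ustar i' j'|
            ≤ Γ * (Γ ^ n * supNorm I J (nodes_nonempty hI hJ)
                (fun i j => v0 i j - extFn I J ustar i j)) := hkey
          _ = Γ ^ (n + 1) * supNorm I J (nodes_nonempty hI hJ)
                (fun i j => v0 i j - extFn I J ustar i j) := by ring
    refine ⟨hbound, ?_⟩
    refine squeeze_zero (fun n => supNorm_nonneg I J _ _) hbound ?_
    simpa using (tendsto_pow_atTop_nhds_zero_of_lt_one hΓ0 hΓlt1).mul_const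
        (supNorm I J (nodes_nonempty hI hJ) (fun i j => v0 i j - extFn I J ustar i j))
end

section
/- Suppose the boundary data satisfies $0 \le g_{i,j} \le 1/\beta$ at every boundary node, and let $v_h$ be a mesh function with $F_h[v_h](i,j) = 0$ at every node $(i,j)$. Then $0 \le (v_h)_{i,j} \le 1/\beta$ at every node $(i,j)$ (stability of the scheme). -/
open Set Filter

/-- Stability of the scheme: if `0 ≤ g ≤ 1/β` at every boundary node and
`F_h[v_h] = 0` at every node, then `0 ≤ v_h ≤ 1/β` at every node. -/
theorem stmt13 (I J : ℤ) (hI : 1 ≤ I) (hJ : 1 ≤ J)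
    (h1 h2 β σ k aLow aHigh : ℝ)
    (hh1 : 0 < h1) (hh2 : 0 < h2) (hβ : 0 < β) (hσ : 0 < σ)
    (ha1 : aLow ≤ 0) (ha2 : 0 ≤ aHigh)
    (g : ℤ → ℤ → ℝ)
    (hg : ∀ i j, IsBoundary I J i j → 0 ≤ g i j ∧ g i j ≤ 1 / β)
    (vh : ℤ → ℤ → ℝ)
    (hvh : ∀ i j, IsNode I J i j → Fh I J h1 h2 β σ k aLow aHigh g vh i j = 0) :
    ∀ i j, IsNode I J i j → 0 ≤ vh i j ∧ vh i j ≤ 1 / β := by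
  have hmem : ∀ i j : ℤ, (i, j) ∈ nodes I J ↔ IsNode I J i j := by
    intro i j
    simp [nodes, Finset.mem_product, Finset.mem_Icc, IsNode, and_assoc]
  obtain ⟨pmax, hpmax, hmax⟩ :=
    Finset.exists_max_image (nodes I J) (fun p => vh p.1 p.2) (nodes_nonempty hI hJ)
  obtain ⟨pmin, hpmin, hmin⟩ :=
    Finset.exists_min_image (nodes I J) (fun p => vh p.1 p.2) (nodes_nonempty hI hJ)
  obtain ⟨im, jm⟩ := pmax
  obtain ⟨in', jn⟩ := pmin
  simp only at hmax hmin
  have hub : vh im jm ≤ 1 / β := by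
    have hnode : IsNode I J im jm := (hmem im jm).1 hpmax
    have heq := hvh im jm hnode
    by_cases hint : IsInterior I J im jm
    · rw [Fh, if_pos hint] at heq
      have hn1 : vh (im + 1) jm ≤ vh im jm :=
        hmax (im + 1, jm) ((hmem _ _).2 ⟨by omega, by omega, hnode.2.2⟩)
      have hn2 : vh (im - 1) jm ≤ vh im jm :=
        hmax (im - 1, jm) ((hmem _ _).2 ⟨by omega, by omega, hnode.2.2⟩)
      have hn3 : vh im (jm - 1) ≤ vh im jm :=
        hmax (im, jm - 1) ((hmem _ _).2 ⟨hnode.1, hnode.2.1, by omega, by omega⟩)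
      have hS : 0 ≤ sInf ((fun a : ℝ =>
          max (k * ((im : ℝ) * h1) + a) 0 * ((vh im jm - vh (im - 1) jm) / h1)
          - max (-(k * ((im : ℝ) * h1) + a)) 0 * ((vh (im + 1) jm - vh im jm) / h1)
          + |a| * ((vh im jm - vh im (jm - 1)) / h2)) '' Set.Icc aLow aHigh) := by
        apply Real.sInf_nonneg
        rintro x ⟨a, -, rfl⟩
        have hd1 : 0 ≤ (vh im jm - vh (im - 1) jm) / h1 :=
          div_nonneg (by linarith) hh1.le
        have hd2 : (vh (im + 1) jm - vh im jm) / h1 ≤ 0 :=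
          div_nonpos_of_nonpos_of_nonneg (by linarith) hh1.le
        have hd3 : 0 ≤ (vh im jm - vh im (jm - 1)) / h2 :=
          div_nonneg (by linarith) hh2.le
        have t1 : 0 ≤ max (k * ((im : ℝ) * h1) + a) 0 * ((vh im jm - vh (im - 1) jm) / h1) :=
          mul_nonneg (le_max_right _ 0) hd1
        have t2 : max (-(k * ((im : ℝ) * h1) + a)) 0 * ((vh (im + 1) jm - vh im jm) / h1) ≤ 0 :=
          mul_nonpos_of_nonneg_of_nonpos (le_max_right _ 0) hd2
        have t3 : 0 ≤ |a| * ((vh im jm - vh im (jm - 1)) / h2) :=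
          mul_nonneg (abs_nonneg a) hd3
        linarith
      have hsd : vh (im + 1) jm - 2 * vh im jm + vh (im - 1) jm ≤ 0 := by linarith
      have hD : σ ^ 2 / (2 * h1 ^ 2) * (vh (im + 1) jm - 2 * vh im jm + vh (im - 1) jm) ≤ 0 :=
        mul_nonpos_of_nonneg_of_nonpos (by positivity) hsd
      have hβv : β * vh im jm ≤ 1 := by linarith
      rw [le_div_iff₀ hβ]
      linarith [mul_comm β (vh im jm)]
    · rw [Fh, if_neg hint] at heq
      have := (hg im jm ⟨hnode, hint⟩).2
      linarith
  have hlb : 0 ≤ vh in' jn := by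
    have hnode : IsNode I J in' jn := (hmem in' jn).1 hpmin
    have heq := hvh in' jn hnode
    by_cases hint : IsInterior I J in' jn
    · rw [Fh, if_pos hint] at heq
      have hn1 : vh in' jn ≤ vh (in' + 1) jn :=
        hmin (in' + 1, jn) ((hmem _ _).2 ⟨by omega, by omega, hnode.2.2⟩)
      have hn2 : vh in' jn ≤ vh (in' - 1) jn :=
        hmin (in' - 1, jn) ((hmem _ _).2 ⟨by omega, by omega, hnode.2.2⟩)
      have hn3 : vh in' jn ≤ vh in' (jn - 1) :=
        hmin (in', jn - 1) ((hmem _ _).2 ⟨hnode.1, hnode.2.1, by omega, by omega⟩)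
      have hS : sInf ((fun a : ℝ =>
          max (k * ((in' : ℝ) * h1) + a) 0 * ((vh in' jn - vh (in' - 1) jn) / h1)
          - max (-(k * ((in' : ℝ) * h1) + a)) 0 * ((vh (in' + 1) jn - vh in' jn) / h1)
          + |a| * ((vh in' jn - vh in' (jn - 1)) / h2)) '' Set.Icc aLow aHigh) ≤ 0 := by
        apply Real.sInf_nonpos
        rintro x ⟨a, -, rfl⟩
        have hd1 : (vh in' jn - vh (in' - 1) jn) / h1 ≤ 0 :=
          div_nonpos_of_nonpos_of_nonneg (by linarith) hh1.le
        have hd2 : 0 ≤ (vh (in' + 1) jn - vh in' jn) / h1 :=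
          div_nonneg (by linarith) hh1.le
        have hd3 : (vh in' jn - vh in' (jn - 1)) / h2 ≤ 0 :=
          div_nonpos_of_nonpos_of_nonneg (by linarith) hh2.le
        have t1 : max (k * ((in' : ℝ) * h1) + a) 0 * ((vh in' jn - vh (in' - 1) jn) / h1) ≤ 0 :=
          mul_nonpos_of_nonneg_of_nonpos (le_max_right _ 0) hd1
        have t2 : 0 ≤ max (-(k * ((in' : ℝ) * h1) + a)) 0 * ((vh (in' + 1) jn - vh in' jn) / h1) :=
          mul_nonneg (le_max_right _ 0) hd2
        have t3 : |a| * ((vh in' jn - vh in' (jn - 1)) / h2) ≤ 0 :=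
          mul_nonpos_of_nonneg_of_nonpos (abs_nonneg a) hd3
        linarith
      have hsd : 0 ≤ vh (in' + 1) jn - 2 * vh in' jn + vh (in' - 1) jn := by linarith
      have hD : 0 ≤ σ ^ 2 / (2 * h1 ^ 2) * (vh (in' + 1) jn - 2 * vh in' jn + vh (in' - 1) jn) :=
        mul_nonneg (by positivity) hsd
      have hβv : 1 ≤ β * vh in' jn := by linarith
      nlinarith
    · rw [Fh, if_neg hint] at heq
      have := (hg in' jn ⟨hnode, hint⟩).1
      linarith
  intro i j hij
  exact ⟨le_trans hlb (hmin (i, j) ((hmem i j).2 hij)),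
    le_trans (hmax (i, j) ((hmem i j).2 hij)) hub⟩
end
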